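/- (Equivalence in Schwarz's example) Let r > 0, H > 0, let A_E(m,n) := 2 m n r sin(π/n) √((H/m)² + r²(1 − cos(π/n))²) be the inscribed polygonal area and R(m,n) the circumradius of the constituent isosceles triangle (base 2r sin(π/n), height √((H/m)² + r²(1 − cos(π/n))²)). Then for any sequences of positive integers m_k → ∞, n_k → ∞, the following are equivalent: (a) A_E(m_k,n_k) → 2πrH; (b) m_k/n_k² → 0; (c) R(m_k,n_k) → 0. -/

import Mathlib

noncomputable section
open MeasureTheory Real Filter
open scoped ENNReal

/-- The Euclidean plane `ℝ²`. -/
abbrev E2 : Type := EuclideanSpace ℝ (Fin 2)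

/-- `f'` is a weak (distributional) derivative of `f` on the set `U ⊆ ℝ²`:
integration by parts against all smooth test functions compactly supported in `U`. -/
def IsWeakFDerivOn {F : Type} [NormedAddCommGroup F] [NormedSpace ℝ F]
    (U : Set E2) (f : E2 → F) (f' : E2 → (E2 →L[ℝ] F)) : Prop :=
  ∀ φ : E2 → ℝ, ContDiff ℝ (⊤ : ℕ∞) φ → HasCompactSupport φ → tsupport φ ⊆ U →
    ∫ x in U, φ x • f' x = - ∫ x in U, (fderiv ℝ φ x).smulRight (f x)

/-- The (closed) triangle with vertices `p 0`, `p 1`, `p 2`. -/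
def Tri (p : Fin 3 → E2) : Set E2 := convexHull ℝ (Set.range p)

/-- The circumradius of a nondegenerate triangle. -/
def circumradius3 (p : Fin 3 → E2) (hp : AffineIndependent ℝ p) : ℝ :=
  (Affine.Simplex.mk p hp).circumradius

/-- The standard basis vectors of `ℝ²`. -/
def e2 (i : Fin 2) : E2 := EuclideanSpace.single i 1

/-- Squared Euclidean norm of the gradient (represented as a continuous linear functional). -/
def gradNormSq (a : E2 →L[ℝ] ℝ) : ℝ := ∑ i, (a (e2 i))^2

/-- Squared Frobenius norm of the Hessian (all second derivatives). -/
def hessNormSq (H : E2 →L[ℝ] E2 →L[ℝ] ℝ) : ℝ := ∑ i, ∑ j, (H (e2 i) (e2 j))^2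

/-- The point `(x, y) ∈ ℝ²`. -/
def pt (x y : ℝ) : E2 := WithLp.toLp 2 ![x, y]

/-- The (unsigned) area of the triangle with vertices `p 0`, `p 1`, `p 2`. -/
def triArea (p : Fin 3 → E2) : ℝ :=
  |(p 1 0 - p 0 0) * (p 2 1 - p 0 1) - (p 1 1 - p 0 1) * (p 2 0 - p 0 0)| / 2

/-- The total area of the inscribed polygonal surface in Schwarz's example for the cylinder
of radius `r` and height `H`: `2mn` congruent isosceles triangles, each of base
`2r sin(π/n)` and height `√((H/m)² + r²(1 − cos(π/n))²)`. -/
def schwarzArea (r H : ℝ) (m n : ℕ) : ℝ :=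
  2 * (m:ℝ) * (n:ℝ) * r * Real.sin (π / n) *
    Real.sqrt ((H / m)^2 + r^2 * (1 - Real.cos (π / n))^2)

/-- The circumradius of an isosceles triangle with base `b` and height `t`. -/
def isoCircumradius (b t : ℝ) : ℝ := t/2 + b^2/(8*t)

/-- The circumradius of each isosceles triangle in Schwarz's example. -/
def schwarzCircumradius (r H : ℝ) (m n : ℕ) : ℝ :=
  isoCircumradius (2 * r * Real.sin (π / n))
    (Real.sqrt ((H / m)^2 + r^2 * (1 - Real.cos (π / n))^2))

/-!
Everything is governed by the sag ratio `X = m (1 - cos (π / n))`, which is comparable to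
`m / n²` because `2 x² / π² ≤ 1 - cos x ≤ x² / 2` on `[-π, π]`. With `s = √(H² + r² X²)`, the
area is `2 r (n sin (π / n)) s` and `n sin (π / n) → π`, so it tends to `2πrH` iff `s → H` iff
`X → 0`. The circumradius is `s / (2m) + r² X (1 + cos (π / n)) / (2 s)`: the first term always
vanishes, and the second is comparable to `X / s`, which determines `X` continuously near `0`.
-/

open Topology

-- These bounds also hold for `n = 0`, where everything vanishes since `π / 0 = 0`.
lemma two_div_sq_le_one_sub_cos_pi_div (n : ℕ) : 2 / (n : ℝ) ^ 2 ≤ 1 - cos (π / n) := by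
  rcases Nat.eq_zero_or_pos n with rfl | hn
  · simp
  have hx : |π / n| ≤ π := by
    rw [abs_of_nonneg (by positivity)]
    exact div_le_self pi_pos.le (by exact_mod_cast hn)
  have h := cos_le_one_sub_mul_cos_sq hx
  have : 2 / π ^ 2 * (π / n) ^ 2 = 2 / (n : ℝ) ^ 2 := by field_simp
  linarith

lemma one_sub_cos_pi_div_le (n : ℕ) : 1 - cos (π / n) ≤ π ^ 2 / 2 / (n : ℝ) ^ 2 := by
  have := one_sub_sq_div_two_le_cos (x := π / n)
  have : (π / n) ^ 2 / 2 = π ^ 2 / 2 / (n : ℝ) ^ 2 := by ring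
  linarith

lemma tendsto_natCast_mul_sin_pi_div :
    Tendsto (fun n : ℕ => (n : ℝ) * sin (π / n)) atTop (𝓝 π) := by
  have hsinc : Tendsto (fun n : ℕ => π * sinc (π / n)) atTop (𝓝 (π * sinc 0)) :=
    ((continuous_sinc.tendsto 0).comp (tendsto_const_div_atTop_nhds_zero_nat π)).const_mul π
  rw [sinc_zero, mul_one] at hsinc
  refine hsinc.congr' ?_
  filter_upwards [eventually_ne_atTop 0] with n hn
  rw [sinc_of_ne_zero (by positivity)]
  field_simp

/-- `r * schwarzSag m n / H` is the ratio of the radial sag `r (1 - cos (π / n))` of a triangle to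
the layer height `H / m`. -/
def schwarzSag (m n : ℕ) : ℝ := m * (1 - cos (π / n))

lemma schwarzSag_nonneg (m n : ℕ) : 0 ≤ schwarzSag m n :=
  mul_nonneg m.cast_nonneg (sub_nonneg.2 (cos_le_one _))

lemma tendsto_schwarzSag_iff {α : Type*} {l : Filter α} (m n : α → ℕ) :
    Tendsto (fun k => schwarzSag (m k) (n k)) l (𝓝 0) ↔
      Tendsto (fun k => (m k : ℝ) / (n k : ℝ) ^ 2) l (𝓝 0) := by
  have lower (k : α) : 2 * ((m k : ℝ) / (n k : ℝ) ^ 2) ≤ schwarzSag (m k) (n k) := by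
    rw [schwarzSag, mul_div_left_comm]
    exact mul_le_mul_of_nonneg_left (two_div_sq_le_one_sub_cos_pi_div _) (m k).cast_nonneg
  have upper (k : α) : schwarzSag (m k) (n k) ≤ π ^ 2 / 2 * ((m k : ℝ) / (n k : ℝ) ^ 2) := by
    rw [schwarzSag, mul_div_left_comm]
    exact mul_le_mul_of_nonneg_left (one_sub_cos_pi_div_le _) (m k).cast_nonneg
  constructor
  · intro h
    refine squeeze_zero (fun k => by positivity) (fun k => ?_) (by simpa using h.div_const 2)
    linarith [lower k]
  · intro h
    exact squeeze_zero (fun k => schwarzSag_nonneg _ _) upper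
      (by simpa using h.const_mul (π ^ 2 / 2))

lemma natCast_mul_sqrt_eq_sqrt_schwarzSag (r H : ℝ) {m : ℕ} (hm : m ≠ 0) (n : ℕ) :
    m * √((H / m) ^ 2 + r ^ 2 * (1 - cos (π / n)) ^ 2) =
      √(H ^ 2 + r ^ 2 * schwarzSag m n ^ 2) := by
  have hm' : (0 : ℝ) < m := by positivity
  have : H ^ 2 + r ^ 2 * schwarzSag m n ^ 2 =
      (m : ℝ) ^ 2 * ((H / m) ^ 2 + r ^ 2 * (1 - cos (π / n)) ^ 2) := by
    rw [schwarzSag]; field_simp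
  rw [this, sqrt_mul (sq_nonneg _), sqrt_sq hm'.le]

lemma schwarzArea_eq (r H : ℝ) {m : ℕ} (hm : m ≠ 0) (n : ℕ) :
    schwarzArea r H m n =
      √(H ^ 2 + r ^ 2 * schwarzSag m n ^ 2) * (2 * r * (n * sin (π / n))) := by
  rw [schwarzArea, ← natCast_mul_sqrt_eq_sqrt_schwarzSag r H hm]
  ring

lemma schwarzCircumradius_eq (r H : ℝ) {m : ℕ} (hm : m ≠ 0) (n : ℕ) :
    schwarzCircumradius r H m n =
      √(H ^ 2 + r ^ 2 * schwarzSag m n ^ 2) / (2 * m) +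
        r ^ 2 * schwarzSag m n * (1 + cos (π / n)) /
          (2 * √(H ^ 2 + r ^ 2 * schwarzSag m n ^ 2)) := by
  have hsin : sin (π / n) ^ 2 = (1 - cos (π / n)) * (1 + cos (π / n)) := by
    rw [sin_sq]; ring
  rw [schwarzCircumradius, isoCircumradius, ← natCast_mul_sqrt_eq_sqrt_schwarzSag r H hm,
    schwarzSag, mul_pow, hsin]
  field_simp
  ring

section Limits

variable {α : Type*} {l : Filter α} {H r : ℝ} {x : α → ℝ}

lemma tendsto_sqrt_sq_add_mul_sq (hH : 0 ≤ H) (h : Tendsto x l (𝓝 0)) :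
    Tendsto (fun k => √(H ^ 2 + r ^ 2 * x k ^ 2)) l (𝓝 H) := by
  have := (((h.pow 2).const_mul (r ^ 2)).const_add (H ^ 2)).sqrt
  rwa [zero_pow two_ne_zero, mul_zero, add_zero, sqrt_sq hH] at this

lemma tendsto_sqrt_sq_add_mul_sq_iff (hH : 0 ≤ H) (hr : r ≠ 0) :
    Tendsto (fun k => √(H ^ 2 + r ^ 2 * x k ^ 2)) l (𝓝 H) ↔ Tendsto x l (𝓝 0) := by
  refine ⟨fun h => ?_, tendsto_sqrt_sq_add_mul_sq hH⟩
  have hx (k : α) : |x k| = √((√(H ^ 2 + r ^ 2 * x k ^ 2) ^ 2 - H ^ 2) / r ^ 2) := by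
    rw [sq_sqrt (by positivity), add_sub_cancel_left, mul_div_cancel_left₀ _ (by positivity),
      sqrt_sq_eq_abs]
  have := (((h.pow 2).sub_const (H ^ 2)).div_const (r ^ 2)).sqrt
  rw [sub_self, zero_div, sqrt_zero, ← funext hx] at this
  exact (tendsto_zero_iff_abs_tendsto_zero x).2 this

-- `x ↦ x / √(H² + r² x²)` has the inverse `y ↦ H y / √(1 - r² y²)`.
lemma tendsto_div_sqrt_sq_add_mul_sq_iff (hH : 0 < H) :
    Tendsto (fun k => x k / √(H ^ 2 + r ^ 2 * x k ^ 2)) l (𝓝 0) ↔ Tendsto x l (𝓝 0) := by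
  refine ⟨fun h => ?_, fun h => ?_⟩
  · set s := fun k => √(H ^ 2 + r ^ 2 * x k ^ 2)
    have hx (k : α) : x k = H * (x k / s k) / √(1 - r ^ 2 * (x k / s k) ^ 2) := by
      have hs : 0 < s k := sqrt_pos.2 (by positivity)
      have hs2 : s k ^ 2 = H ^ 2 + r ^ 2 * x k ^ 2 := sq_sqrt (by positivity)
      have : 1 - r ^ 2 * (x k / s k) ^ 2 = (H / s k) ^ 2 := by
        field_simp
        linarith
      rw [this, sqrt_sq (by positivity)]
      field_simp
    have := (h.const_mul H).div (((h.pow 2).const_mul (r ^ 2)).const_sub 1).sqrt (by simp)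
    rw [mul_zero, zero_div] at this
    exact this.congr fun k => (hx k).symm
  · have := h.div (tendsto_sqrt_sq_add_mul_sq (r := r) hH.le h) hH.ne'
    rwa [zero_div] at this

end Limits

section Schwarz

variable {α : Type*} {l : Filter α} {r H : ℝ} {m n : α → ℕ}

lemma tendsto_schwarzArea_iff (hr : r ≠ 0) (hH : 0 ≤ H) (hm : ∀ᶠ k in l, m k ≠ 0)
    (hn : Tendsto n l atTop) :
    Tendsto (fun k => schwarzArea r H (m k) (n k)) l (𝓝 (2 * π * r * H)) ↔
      Tendsto (fun k => schwarzSag (m k) (n k)) l (𝓝 0) := by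
  have hsin : Tendsto (fun k => 2 * r * (n k * sin (π / n k))) l (𝓝 (2 * r * π)) :=
    (tendsto_natCast_mul_sin_pi_div.comp hn).const_mul _
  rw [tendsto_congr' (hm.mono fun k hk => schwarzArea_eq r H hk (n k)),
    show 2 * π * r * H = H * (2 * r * π) by ring, tendsto_mul_iff_of_ne_zero hsin (by positivity),
    tendsto_sqrt_sq_add_mul_sq_iff hH hr]

lemma tendsto_schwarzCircumradius_iff (hr : r ≠ 0) (hH : 0 < H) (hm : Tendsto m l atTop)
    (hn : Tendsto n l atTop) :
    Tendsto (fun k => schwarzCircumradius r H (m k) (n k)) l (𝓝 0) ↔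
      Tendsto (fun k => schwarzSag (m k) (n k)) l (𝓝 0) := by
  set X := fun k => schwarzSag (m k) (n k)
  set s := fun k => √(H ^ 2 + r ^ 2 * X k ^ 2)
  have hs_pos (k : α) : 0 < s k := sqrt_pos.2 (by positivity)
  have hcos : Tendsto (fun k => cos (π / n k)) l (𝓝 1) := by
    have := ((continuous_cos.tendsto 0).comp (tendsto_const_div_atTop_nhds_zero_nat π)).comp hn
    rwa [cos_zero] at this
  rw [tendsto_congr' ((hm.eventually_ne_atTop 0).mono fun k hk =>
    schwarzCircumradius_eq r H hk (n k))]
  constructor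
  · intro h
    rw [← tendsto_div_sqrt_sq_add_mul_sq_iff hH (r := r)]
    refine squeeze_zero' (.of_forall fun k => div_nonneg (schwarzSag_nonneg _ _) (hs_pos k).le)
      ?_ (by simpa using h.const_mul (2 / r ^ 2))
    filter_upwards [hcos.eventually (eventually_ge_nhds zero_lt_one)] with k hk
    have h1 : X k / s k ≤ 2 / r ^ 2 * (r ^ 2 * X k * (1 + cos (π / n k)) / (2 * s k)) := by
      rw [show 2 / r ^ 2 * (r ^ 2 * X k * (1 + cos (π / n k)) / (2 * s k)) =
        X k / s k * (1 + cos (π / n k)) by field_simp]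
      exact le_mul_of_one_le_right (div_nonneg (schwarzSag_nonneg _ _) (hs_pos k).le) (by linarith)
    have h2 : 0 ≤ 2 / r ^ 2 * (s k / (2 * m k)) := by positivity
    rw [mul_add]
    linarith
  · intro h
    have hs : Tendsto s l (𝓝 H) := tendsto_sqrt_sq_add_mul_sq hH.le h
    have := (hs.div_atTop ((tendsto_natCast_atTop_atTop.comp hm).const_mul_atTop two_pos)).add
      (((h.const_mul (r ^ 2)).mul (hcos.const_add 1)).div (hs.const_mul 2) (by positivity))
    simpa using this

end Schwarz

/-- **equivalence in Schwarz's example.** For `r, H > 0` and sequences of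
positive integers `m_k, n_k → ∞`, the following are equivalent:
(a) the inscribed polygonal areas satisfy `A_E(m_k, n_k) → 2πrH`;
(b) `m_k/n_k² → 0`;
(c) the circumradii of the constituent isosceles triangles satisfy `R(m_k, n_k) → 0`. -/
theorem schwarz_equivalence (r H : ℝ) (hr : 0 < r) (hH : 0 < H)
    (m n : ℕ → ℕ) (hm : Tendsto m atTop atTop) (hn : Tendsto n atTop atTop) :
    (Tendsto (fun k => schwarzArea r H (m k) (n k)) atTop (nhds (2 * π * r * H)) ↔
      Tendsto (fun k => (m k : ℝ) / (n k : ℝ)^2) atTop (nhds 0)) ∧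
    (Tendsto (fun k => schwarzCircumradius r H (m k) (n k)) atTop (nhds 0) ↔
      Tendsto (fun k => (m k : ℝ) / (n k : ℝ)^2) atTop (nhds 0)) := by
  rw [tendsto_schwarzArea_iff hr.ne' hH.le (hm.eventually_ne_atTop 0) hn,
    tendsto_schwarzCircumradius_iff hr.ne' hH hm hn, tendsto_schwarzSag_iff]
  exact ⟨Iff.rfl, Iff.rfl⟩
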